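/- Let k be a field, H a commutative k-bialgebra, and (M,·,ρ) a left-right H-Hopf module: M is a left H-module (with k-linear action), a right H-comodule via ρ : M → M⊗H written ρ(m) = Σ m₍₀₎⊗m₍₁₎, and the compatibility ρ(h·m) = Σ h₍₁₎·m₍₀₎ ⊗ h₍₂₎m₍₁₎ holds for all h ∈ H, m ∈ M. Then the map R := R_{(M,·,ρ)} : M⊗M → M⊗M, R(m⊗n) = Σ n₍₁₎·m ⊗ n₍₀₎, is a commutative solution of the Hopf equation: R¹²R²³ = R²³R¹³R¹² and R¹²R¹³ = R¹³R¹². -/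

import Mathlib

open TensorProduct LinearMap

section HopfEq

variable (k V : Type*) [Field k] [AddCommGroup V] [Module k V]

/-- The flip map `τ : V ⊗ V → V ⊗ V`, `τ(v ⊗ w) = w ⊗ v`. -/
noncomputable def flipMap : V ⊗[k] V →ₗ[k] V ⊗[k] V :=
  (TensorProduct.comm k V V).toLinearMap

variable {k V}

/-- `R¹² = R ⊗ I` as an endomorphism of `V ⊗ V ⊗ V`. -/
noncomputable def map12 (R : V ⊗[k] V →ₗ[k] V ⊗[k] V) :
    V ⊗[k] (V ⊗[k] V) →ₗ[k] V ⊗[k] (V ⊗[k] V) :=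
  (TensorProduct.assoc k V V V).toLinearMap ∘ₗ R.rTensor V ∘ₗ
    (TensorProduct.assoc k V V V).symm.toLinearMap

/-- `R²³ = I ⊗ R` as an endomorphism of `V ⊗ V ⊗ V`. -/
noncomputable def map23 (R : V ⊗[k] V →ₗ[k] V ⊗[k] V) :
    V ⊗[k] (V ⊗[k] V) →ₗ[k] V ⊗[k] (V ⊗[k] V) :=
  R.lTensor V

/-- `R¹³ = (I ⊗ τ)(R ⊗ I)(I ⊗ τ)` as an endomorphism of `V ⊗ V ⊗ V`. -/
noncomputable def map13 (R : V ⊗[k] V →ₗ[k] V ⊗[k] V) :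
    V ⊗[k] (V ⊗[k] V) →ₗ[k] V ⊗[k] (V ⊗[k] V) :=
  (flipMap k V).lTensor V ∘ₗ map12 R ∘ₗ (flipMap k V).lTensor V

/-- `R` is a solution of the Hopf equation: `R¹²R²³ = R²³R¹³R¹²`. -/
def IsHopfSolution (R : V ⊗[k] V →ₗ[k] V ⊗[k] V) : Prop :=
  map12 R ∘ₗ map23 R = map23 R ∘ₗ map13 R ∘ₗ map12 R

/-- `R` is a solution of the pentagonal equation: `R¹²R¹³R²³ = R²³R¹²`. -/
def IsPentagonSolution (R : V ⊗[k] V →ₗ[k] V ⊗[k] V) : Prop :=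
  map12 R ∘ₗ map13 R ∘ₗ map23 R = map23 R ∘ₗ map12 R

end HopfEq

variable (k H M : Type*) [Field k] [CommRing H] [Bialgebra k H] [AddCommGroup M] [Module k M]

/-- For a left action `μ : H ⊗ M → M` and a coaction `ρ : M → M ⊗ H`,
`ρ(m) = Σ m₍₀₎ ⊗ m₍₁₎`, the map `R : M ⊗ M → M ⊗ M`, `R(m ⊗ n) = Σ n₍₁₎·m ⊗ n₍₀₎`. -/
noncomputable def hopfModuleMap (μ : H ⊗[k] M →ₗ[k] M) (ρ : M →ₗ[k] M ⊗[k] H) :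
    M ⊗[k] M →ₗ[k] M ⊗[k] M :=
  μ.rTensor M ∘ₗ ((TensorProduct.comm k M H).toLinearMap.rTensor M) ∘ₗ
    (TensorProduct.assoc k M H M).symm.toLinearMap ∘ₗ
    ((TensorProduct.comm k M H).toLinearMap.lTensor M) ∘ₗ ρ.lTensor M


/-! Write `R(m ⊗ n) = n₍₁₎·m ⊗ n₍₀₎`. On `m ⊗ n ⊗ p`, the compatibility of `ρ` with the action
gives `R¹²R²³ = p₍₁₎₍₂₎n₍₁₎·m ⊗ p₍₁₎₍₁₎·n₍₀₎ ⊗ p₍₀₎`, while `R²³R¹³R¹²` produces the same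
expression with `ρ` applied to `p₍₀₎` instead of `Δ` to `p₍₁₎`; coassociativity identifies the two.
For the second identity, `R¹³` leaves the second factor alone and changes the first only by the
action of `H`, and `R` is `H`-linear in its first argument because `H` is commutative. -/

section TwistedActions

variable {R A N X : Type*} [CommSemiring R] [AddCommMonoid A] [Module R A]
  [AddCommMonoid N] [Module R N] [AddCommMonoid X] [Module R X]
variable (μ : A ⊗[R] N →ₗ[R] N)

noncomputable def twistAct : N ⊗[R] (N ⊗[R] A) →ₗ[R] N ⊗[R] N :=
  μ.rTensor N ∘ₗ (TensorProduct.comm R N A).toLinearMap.rTensor N ∘ₗ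
    (TensorProduct.assoc R N A N).symm.toLinearMap ∘ₗ
    (TensorProduct.comm R N A).toLinearMap.lTensor N

@[simp] lemma twistAct_tmul (m x : N) (a : A) :
    twistAct μ (m ⊗ₜ (x ⊗ₜ a)) = μ (a ⊗ₜ m) ⊗ₜ x := by
  simp [twistAct]

noncomputable def actFirst : (N ⊗[R] N) ⊗[R] (X ⊗[R] A) →ₗ[R] N ⊗[R] (N ⊗[R] X) :=
  TensorProduct.map μ LinearMap.id ∘ₗ
    (TensorProduct.comm R N A).toLinearMap.rTensor (N ⊗[R] X) ∘ₗ
    (TensorProduct.tensorTensorTensorComm R N N A X).toLinearMap ∘ₗ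
    (TensorProduct.comm R X A).toLinearMap.lTensor (N ⊗[R] N)

@[simp] lemma actFirst_tmul (m n : N) (x : X) (a : A) :
    actFirst μ ((m ⊗ₜ n) ⊗ₜ (x ⊗ₜ a)) = μ (a ⊗ₜ m) ⊗ₜ (n ⊗ₜ x) := by
  simp [actFirst]

end TwistedActions

lemma twistAct_smul_tmul {R A N : Type*} [CommSemiring R] [CommSemiring A] [Algebra R A]
    [AddCommMonoid N] [Module R N] (μ : A ⊗[R] N →ₗ[R] N)
    (hμ : ∀ (a b : A) (m : N), μ ((a * b) ⊗ₜ m) = μ (a ⊗ₜ μ (b ⊗ₜ m)))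
    (a : A) (m : N) (s : N ⊗[R] A) :
    twistAct μ (μ (a ⊗ₜ m) ⊗ₜ s) = (curry μ a).rTensor N (twistAct μ (m ⊗ₜ s)) := by
  induction s using TensorProduct.induction_on with
  | zero => simp
  | tmul x b => simp [← hμ, mul_comm]
  | add s t hs ht => simp only [tmul_add, map_add, hs, ht]

section HopfEquation

variable {k}

lemma map12_tmul {V : Type*} [AddCommGroup V] [Module k V] (R : V ⊗[k] V →ₗ[k] V ⊗[k] V)
    (a b c : V) : map12 R (a ⊗ₜ (b ⊗ₜ c)) = TensorProduct.assoc k V V V (R (a ⊗ₜ b) ⊗ₜ c) := by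
  simp [map12]

variable {H M}
variable (μ : H ⊗[k] M →ₗ[k] M) (ρ : M →ₗ[k] M ⊗[k] H)

lemma hopfModuleMap_tmul (m n : M) :
    hopfModuleMap k H M μ ρ (m ⊗ₜ n) = twistAct μ (m ⊗ₜ ρ n) := rfl

lemma map13_hopfModuleMap_assoc_tmul (q : M ⊗[k] M) (p : M) :
    map13 (hopfModuleMap k H M μ ρ) (TensorProduct.assoc k M M M (q ⊗ₜ p))
      = actFirst μ (q ⊗ₜ ρ p) := by
  induction q using TensorProduct.induction_on with
  | zero => simp
  | tmul m n =>
    simp only [TensorProduct.assoc_tmul, map13, flipMap, LinearMap.comp_apply,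
      lTensor_tmul, LinearEquiv.coe_coe, TensorProduct.comm_tmul, map12_tmul,
      hopfModuleMap_tmul]
    induction ρ p using TensorProduct.induction_on with
    | zero => simp
    | tmul x h => simp
    | add s t hs ht => simp only [tmul_add, add_tmul, map_add, hs, ht]
  | add q q' hq hq' => simp only [add_tmul, map_add, hq, hq']

lemma map23_hopfModuleMap_actFirst (q : M ⊗[k] M) (t : M ⊗[k] H) :
    map23 (hopfModuleMap k H M μ ρ) (actFirst μ (q ⊗ₜ t))
      = (twistAct μ).lTensor M (actFirst μ (q ⊗ₜ ρ.rTensor H t)) := by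
  induction q using TensorProduct.induction_on with
  | zero => simp
  | tmul m n =>
    induction t using TensorProduct.induction_on with
    | zero => simp
    | tmul x h => simp [map23, hopfModuleMap_tmul]
    | add s t hs ht => simp only [tmul_add, map_add, hs, ht]
  | add q q' hq hq' => simp only [add_tmul, map_add, hq, hq']

lemma map12_hopfModuleMap_actFirst
    (hμ_mul : ∀ (a b : H) (m : M), μ ((a * b) ⊗ₜ[k] m) = μ (a ⊗ₜ[k] μ (b ⊗ₜ[k] m)))
    (q : M ⊗[k] M) (t : M ⊗[k] H) :
    map12 (hopfModuleMap k H M μ ρ) (actFirst μ (q ⊗ₜ t))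
      = actFirst μ (hopfModuleMap k H M μ ρ q ⊗ₜ t) := by
  induction t using TensorProduct.induction_on with
  | zero => simp
  | tmul x h =>
    induction q using TensorProduct.induction_on with
    | zero => simp
    | tmul m n =>
      rw [actFirst_tmul, map12_tmul, hopfModuleMap_tmul, hopfModuleMap_tmul,
        twistAct_smul_tmul μ hμ_mul]
      induction twistAct μ (m ⊗ₜ ρ n) using TensorProduct.induction_on with
      | zero => simp
      | tmul a b => simp
      | add u v hu hv => simp only [add_tmul, map_add, hu, hv]
    | add q q' hq hq' => simp only [add_tmul, map_add, hq, hq']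
  | add s t hs ht => simp only [tmul_add, map_add, hs, ht]

lemma map12_lTensor_twistAct
    (hμ_mul : ∀ (a b : H) (m : M), μ ((a * b) ⊗ₜ[k] m) = μ (a ⊗ₜ[k] μ (b ⊗ₜ[k] m)))
    (hcompat : ρ ∘ₗ μ = TensorProduct.map μ (LinearMap.mul' k H) ∘ₗ
        (TensorProduct.tensorTensorTensorComm k H H M H).toLinearMap ∘ₗ
        TensorProduct.map (Coalgebra.comul (R := k)) ρ)
    (m n : M) (t : M ⊗[k] H) :
    map12 (hopfModuleMap k H M μ ρ) (m ⊗ₜ twistAct μ (n ⊗ₜ t))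
      = (twistAct μ).lTensor M (actFirst μ (hopfModuleMap k H M μ ρ (m ⊗ₜ n) ⊗ₜ
          (TensorProduct.assoc k M H H).symm ((Coalgebra.comul (R := k)).lTensor M t))) := by
  induction t using TensorProduct.induction_on with
  | zero => simp
  | tmul x h =>
    have hρ_smul := LinearMap.congr_fun hcompat (h ⊗ₜ n)
    simp only [LinearMap.comp_apply, map_tmul] at hρ_smul
    rw [twistAct_tmul, map12_tmul, hopfModuleMap_tmul, hopfModuleMap_tmul, hρ_smul,
      lTensor_tmul]
    induction Coalgebra.comul (R := k) h using TensorProduct.induction_on with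
    | zero => simp
    | tmul g g' =>
      induction ρ n using TensorProduct.induction_on with
      | zero => simp
      | tmul y e => simp [hμ_mul]
      | add u v hu hv => simp only [tmul_add, add_tmul, map_add, hu, hv]
    | add c c' hc hc' => simp only [tmul_add, add_tmul, map_add, hc, hc']
  | add s t hs ht => simp only [tmul_add, map_add, hs, ht]

end HopfEquation

theorem hopfModuleMap_commutative_isHopfSolution (μ : H ⊗[k] M →ₗ[k] M)
    (ρ : M →ₗ[k] M ⊗[k] H)
    (hμ_mul : ∀ (a b : H) (m : M), μ ((a * b) ⊗ₜ[k] m) = μ (a ⊗ₜ[k] μ (b ⊗ₜ[k] m)))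
    (hρ_coassoc : (TensorProduct.assoc k M H H).toLinearMap ∘ₗ ρ.rTensor H ∘ₗ ρ
        = (Coalgebra.comul (R := k)).lTensor M ∘ₗ ρ)
    (hcompat : ρ ∘ₗ μ = TensorProduct.map μ (LinearMap.mul' k H) ∘ₗ
        (TensorProduct.tensorTensorTensorComm k H H M H).toLinearMap ∘ₗ
        TensorProduct.map (Coalgebra.comul (R := k)) ρ) :
    IsHopfSolution (hopfModuleMap k H M μ ρ) ∧
      map12 (hopfModuleMap k H M μ ρ) ∘ₗ map13 (hopfModuleMap k H M μ ρ)
        = map13 (hopfModuleMap k H M μ ρ) ∘ₗ map12 (hopfModuleMap k H M μ ρ) := by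
  set R := hopfModuleMap k H M μ ρ
  have hcoassoc (p : M) : (TensorProduct.assoc k M H H).symm
      ((Coalgebra.comul (R := k)).lTensor M (ρ p)) = ρ.rTensor H (ρ p) := by
    rw [← LinearMap.comp_apply (g := ρ), ← hρ_coassoc]
    simp
  refine ⟨TensorProduct.ext_threefold' fun m n p => ?_,
    TensorProduct.ext_threefold' fun m n p => ?_⟩
  · calc map12 R (map23 R (m ⊗ₜ (n ⊗ₜ p)))
        = (twistAct μ).lTensor M (actFirst μ (R (m ⊗ₜ n) ⊗ₜ
            (TensorProduct.assoc k M H H).symm ((Coalgebra.comul (R := k)).lTensor M (ρ p)))) :=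
          map12_lTensor_twistAct μ ρ hμ_mul hcompat m n (ρ p)
      _ = map23 R (map13 R (TensorProduct.assoc k M M M (R (m ⊗ₜ n) ⊗ₜ p))) := by
          rw [hcoassoc, map13_hopfModuleMap_assoc_tmul, map23_hopfModuleMap_actFirst]
      _ = map23 R (map13 R (map12 R (m ⊗ₜ (n ⊗ₜ p)))) := by rw [map12_tmul]
  · calc map12 R (map13 R (m ⊗ₜ (n ⊗ₜ p)))
        = map12 R (actFirst μ ((m ⊗ₜ n) ⊗ₜ ρ p)) := by
          rw [← map13_hopfModuleMap_assoc_tmul, TensorProduct.assoc_tmul]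
      _ = actFirst μ (R (m ⊗ₜ n) ⊗ₜ ρ p) := map12_hopfModuleMap_actFirst μ ρ hμ_mul _ _
      _ = map13 R (map12 R (m ⊗ₜ (n ⊗ₜ p))) := by
          rw [map12_tmul, map13_hopfModuleMap_assoc_tmul]
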